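/- arXiv:1305.3238 — 2 statements merged into one kernel-verified Lean document; each statement's English description precedes it below -/
import Mathlib

section
/- Let k ≥ 1 be an integer, let s be a complex number with Re s > 1, and let α be a complex number with |α| < k. Then the series Σ_{n≥k} (n+α)^{−s} (which converges absolutely, and in which n+α ≠ 0 for every n ≥ k) satisfies Σ_{n≥k} (n+α)^{−s} = Σ_{n≥0} c_{n,k}(s)·(−α)^n/n!. -/
noncomputable def zetaK (k : ℕ) (s : ℂ) : ℂ :=
  riemannZeta s - ∑ m ∈ Finset.Ico 1 k, (m : ℂ) ^ (-s)

noncomputable def c (n k : ℕ) (s : ℂ) : ℂ :=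
  (∏ j ∈ Finset.range n, (s + j)) * zetaK k (s + n)

/-!
Each term `(m + k + α) ^ (-s)` is expanded in its Taylor series in `α` about `0`, which converges
because `‖α‖ < k ≤ m + k`; its coefficients are `(s)ₙ (m + k) ^ (-s - n) (-α) ^ n / n!`. The double
series is dominated by `(m + k) ^ (-re s) · (‖s‖)ₙ (‖α‖ / k) ^ n / n!`, a convergent `p`-series
times the binomial series of `(1 - ‖α‖ / k) ^ (-‖s‖)`, so the summations may be interchanged, and
summing over `m` first produces `ζₖ(s + n)`.
-/

open Complex Finset

lemma summable_nat_cpow_neg {w : ℂ} (hw : 1 < w.re) : Summable fun m : ℕ => (m : ℂ) ^ (-w) := by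
  simpa [cpow_neg] using Complex.summable_one_div_nat_cpow.mpr hw

lemma zetaK_eq_tsum (k : ℕ) {w : ℂ} (hw : 1 < w.re) :
    zetaK k w = ∑' m : ℕ, ((m : ℂ) + k) ^ (-w) := by
  have hzeta : riemannZeta w = ∑' m : ℕ, (m : ℂ) ^ (-w) := by
    simp [zeta_eq_tsum_one_div_nat_cpow hw, cpow_neg]
  have hhead : ∑ m ∈ range k, (m : ℂ) ^ (-w) = ∑ m ∈ Ico 1 k, (m : ℂ) ^ (-w) := by
    rcases Nat.eq_zero_or_pos k with rfl | hk
    · simp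
    · rw [sum_range_eq_add_Ico _ hk, Nat.cast_zero,
        zero_cpow (neg_ne_zero.mpr (ne_zero_of_one_lt_re hw)), zero_add]
  rw [zetaK, hzeta, ← (summable_nat_cpow_neg hw).sum_add_tsum_nat_add k, hhead]
  push_cast
  ring

lemma ofReal_add_mem_slitPlane {M : ℝ} {z : ℂ} (hz : ‖z‖ < M) : (M : ℂ) + z ∈ slitPlane := by
  refine mem_slitPlane_iff.mpr (Or.inl ?_)
  have := neg_le_of_abs_le (abs_re_le_norm z)
  simp only [add_re, ofReal_re]
  linarith

lemma iteratedDeriv_const_add_cpow (a w : ℂ) (n : ℕ) {z : ℂ} (hz : a + z ∈ slitPlane) :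
    iteratedDeriv n (fun z => (a + z) ^ w) z
      = (∏ j ∈ range n, (w - j)) * (a + z) ^ (w - n) := by
  induction n generalizing z with
  | zero => simp
  | succ n ih =>
    have hU : IsOpen {z : ℂ | a + z ∈ slitPlane} :=
      isOpen_slitPlane.preimage (continuous_const.add continuous_id)
    have hev : iteratedDeriv n (fun z => (a + z) ^ w)
        =ᶠ[nhds z] fun z => (∏ j ∈ range n, (w - j)) * (a + z) ^ (w - n) := by
      filter_upwards [hU.mem_nhds hz] with y hy using ih hy
    have hd : HasDerivAt (fun z => (a + z) ^ (w - n)) ((w - n) * (a + z) ^ (w - n - 1) * 1) z :=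
      ((hasDerivAt_id z).const_add a).cpow_const hz
    rw [iteratedDeriv_succ, hev.deriv_eq, (hd.const_mul _).deriv, prod_range_succ]
    push_cast
    ring_nf

lemma hasSum_ofReal_add_cpow_neg (s : ℂ) {M : ℝ} {z : ℂ} (hz : ‖z‖ < M) :
    HasSum (fun n : ℕ => (∏ j ∈ range n, (s + j)) * (M : ℂ) ^ (-(s + n)) * (-z) ^ n / n.factorial)
      (((M : ℂ) + z) ^ (-s)) := by
  have hf : DifferentiableOn ℂ (fun z : ℂ => ((M : ℂ) + z) ^ (-s)) (Metric.ball 0 M) :=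
    fun y hy => (((differentiableAt_const _).add differentiableAt_id).cpow
      (differentiableAt_const _)
      (ofReal_add_mem_slitPlane (mem_ball_zero_iff.mp hy))).differentiableWithinAt
  refine (hasSum_taylorSeries_on_ball hf (mem_ball_zero_iff.mpr hz)).congr_fun fun n => ?_
  have hM : (M : ℂ) + 0 ∈ slitPlane :=
    ofReal_add_mem_slitPlane (by simpa using (norm_nonneg z).trans_lt hz)
  have hprod : ∏ j ∈ range n, (-s - j) = (-1) ^ n * ∏ j ∈ range n, (s + j) := by
    rw [prod_congr rfl fun (j : ℕ) _ => show -s - j = -1 * (s + j) by ring, ← pow_card_mul_prod,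
      card_range]
  rw [iteratedDeriv_const_add_cpow _ _ n hM, hprod, add_zero, smul_eq_mul, smul_eq_mul,
    sub_zero, neg_pow z, show -s - n = -(s + n) by ring]
  ring

lemma summable_prod_add_mul_pow_div_factorial (t : ℝ) {q : ℝ} (hq : |q| < 1) :
    Summable fun n : ℕ => (∏ j ∈ range n, (t + j)) * q ^ n / n.factorial := by
  have h := (hasSum_ofReal_add_cpow_neg (t : ℂ) (M := 1) (z := -q)
    (by simpa using hq)).summable
  refine Complex.summable_ofReal.mp (h.congr fun n => ?_)
  simp

lemma norm_taylorTerm_le (s z : ℂ) {K M : ℝ} (hK : 0 < K) (hKM : K ≤ M) (n : ℕ) :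
    ‖(∏ j ∈ range n, (s + j)) * (M : ℂ) ^ (-(s + n)) * (-z) ^ n / n.factorial‖
      ≤ M ^ (-s.re) * ((∏ j ∈ range n, (‖s‖ + j)) * (‖z‖ / K) ^ n / n.factorial) := by
  have hM : 0 < M := hK.trans_le hKM
  have hpow : ‖(M : ℂ) ^ (-(s + n))‖ * ‖z‖ ^ n = M ^ (-s.re) * (‖z‖ / M) ^ n := by
    rw [norm_cpow_eq_rpow_re_of_pos hM, neg_add, add_re, Real.rpow_add hM, neg_re, neg_re,
      natCast_re, Real.rpow_neg hM.le (n : ℝ), Real.rpow_natCast, div_pow]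
    ring
  have hprod : ∏ j ∈ range n, ‖s + j‖ ≤ ∏ j ∈ range n, (‖s‖ + j) :=
    prod_le_prod (fun _ _ => norm_nonneg _) fun j _ => by
      simpa using norm_add_le s (j : ℂ)
  have hratio : (‖z‖ / M) ^ n ≤ (‖z‖ / K) ^ n := by gcongr
  calc ‖(∏ j ∈ range n, (s + j)) * (M : ℂ) ^ (-(s + n)) * (-z) ^ n / n.factorial‖
      = M ^ (-s.re) * ((∏ j ∈ range n, ‖s + j‖) * (‖z‖ / M) ^ n / n.factorial) := by
        rw [norm_div, norm_mul, norm_mul, norm_prod, norm_pow, norm_neg, norm_natCast, mul_assoc,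
          hpow]
        ring
    _ ≤ M ^ (-s.re) * ((∏ j ∈ range n, (‖s‖ + j)) * (‖z‖ / K) ^ n / n.factorial) := by
        gcongr

lemma summable_taylorTerm_nat_add (s z : ℂ) (hs : 1 < s.re) {K : ℝ} (hz : ‖z‖ < K) :
    Summable fun p : ℕ × ℕ => (∏ j ∈ range p.2, (s + j)) * ((p.1 + K : ℝ) : ℂ) ^ (-(s + p.2))
      * (-z) ^ p.2 / p.2.factorial := by
  have hK : 0 < K := (norm_nonneg z).trans_lt hz
  refine .of_norm_bounded (g := fun p => (p.1 + K) ^ (-s.re) *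
      ((∏ j ∈ range p.2, (‖s‖ + j)) * (‖z‖ / K) ^ p.2 / p.2.factorial)) ?_
    fun p => norm_taylorTerm_le s z hK (by simp) p.2
  have hζ : Summable fun m : ℕ => (m + K) ^ (-s.re) :=
    ((Real.summable_one_div_nat_add_rpow K s.re).mpr hs).congr fun m => by
      rw [abs_of_nonneg (by positivity), one_div, Real.rpow_neg (by positivity)]
  exact hζ.mul_of_nonneg (summable_prod_add_mul_pow_div_factorial ‖s‖
    (by rwa [abs_of_nonneg (by positivity), div_lt_one hK]))
    (fun m => by positivity) fun n => by positivity

theorem stmt_0_general (k : ℕ) (s : ℂ) (hs : 1 < s.re)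
    (α : ℂ) (hα : ‖α‖ < k) :
    (∀ n : ℕ, ((n : ℂ) + k + α) ≠ 0) ∧
    Summable (fun n : ℕ => ((n : ℂ) + k + α) ^ (-s)) ∧
    ∑' n : ℕ, ((n : ℂ) + k + α) ^ (-s)
      = ∑' n : ℕ, c n k s * (-α) ^ n / (n.factorial : ℂ) := by
  have hα_lt (m : ℕ) : ‖α‖ < (m + k : ℝ) := by linarith [(m.cast_nonneg : (0 : ℝ) ≤ m)]
  set a : ℕ → ℕ → ℂ := fun m n =>
    (∏ j ∈ range n, (s + j)) * ((m : ℂ) + k) ^ (-(s + n)) * (-α) ^ n / n.factorial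
  have hrow (m : ℕ) : HasSum (a m) (((m : ℂ) + k + α) ^ (-s)) := by
    simpa only [ofReal_add, ofReal_natCast] using hasSum_ofReal_add_cpow_neg s (hα_lt m)
  have hA : Summable (Function.uncurry a) := by
    have h := summable_taylorTerm_nat_add s α hs hα
    push_cast at h
    exact h
  have hcol (n : ℕ) : ∑' m, a m n = c n k s * (-α) ^ n / n.factorial := by
    have hre : 1 < (s + n).re := by simpa using hs.trans_le (le_add_of_nonneg_right n.cast_nonneg)
    simp only [a, c, tsum_div_const, tsum_mul_right, tsum_mul_left, zetaK_eq_tsum k hre]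
  refine ⟨fun n => slitPlane_ne_zero (by simpa using ofReal_add_mem_slitPlane (hα_lt n)),
    hA.prod.congr fun m => (hrow m).tsum_eq, ?_⟩
  calc ∑' m : ℕ, ((m : ℂ) + k + α) ^ (-s) = ∑' m, ∑' n, a m n :=
        tsum_congr fun m => (hrow m).tsum_eq.symm
    _ = ∑' n, ∑' m, a m n := hA.tsum_comm.symm
    _ = _ := tsum_congr hcol

theorem stmt_0 (k : ℕ) (hk : 1 ≤ k) (s : ℂ) (hs : 1 < s.re)
    (α : ℂ) (hα : ‖α‖ < k) :
    (∀ n : ℕ, ((n : ℂ) + k + α) ≠ 0) ∧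
    Summable (fun n : ℕ => ((n : ℂ) + k + α) ^ (-s)) ∧
    ∑' n : ℕ, ((n : ℂ) + k + α) ^ (-s)
      = ∑' n : ℕ, c n k s * (-α) ^ n / (n.factorial : ℂ) :=
  stmt_0_general k s hs α hα
end

section
/- Let r ≥ 1 be an integer, let α be a real number with 0 < α < 1, and let G : ℝ → ℂ → ℂ be such that for every x with 0 < x < 1 the function G x is entire (Differentiable ℂ (G x)) and G x w = ζ(w,x) − 1/(w−1) for all w ≠ 1; set γ_r(x) = iteratedDeriv r (G x) 1 / r!. Then the function x ↦ γ_r(x) has derivative −ζ^{(r−1)}(2,α)/(r−1)! − ζ^{(r)}(2,α)/r! at x = α; i.e. HasDerivAt (fun x : ℝ => iteratedDeriv r (G x) 1 / r!) (−(iteratedDeriv (r−1) (fun w => ζ(w,α)) 2)/(r−1)! − (iteratedDeriv r (fun w => ζ(w,α)) 2)/r!) α. -/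
/-!
Write `φₙ(x, s) = (n + x)^{-s}`. Since `∂ₓ φₙ(x, s) = -s φₙ(x, s + 1)`, the mean value theorem
makes `∑ₙ (φₙ(x, s) - φₙ(α, s))` converge locally uniformly for `Re s > 0`, so by analytic
continuation from `Re s > 1` it represents `G x - G α` near `s = 1`. A second-order mean value
bound then shows that the difference quotients `(G (α + t) - G α) / t` converge uniformly on the
disc `|s - 1| < 1/2` to `-s ζ(s + 1, α)` as `t → 0`. By Weierstrass' theorem their `r`-th
`s`-derivatives at `1` converge as well, and the Leibniz rule gives
`dʳ/dsʳ (-s ζ(s + 1, α))|_{s=1} = -(ζ^{(r)}(2, α) + r ζ^{(r-1)}(2, α))`.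
-/

open Complex Filter Topology Metric Set HurwitzZeta

theorem TendstoLocallyUniformlyOn.iteratedDeriv {ι E : Type*} [NormedAddCommGroup E]
    [NormedSpace ℂ E] [CompleteSpace E] {φ : Filter ι} {F : ι → ℂ → E} {f : ℂ → E} {U : Set ℂ}
    (hf : TendstoLocallyUniformlyOn F f φ U) (hF : ∀ᶠ i in φ, DifferentiableOn ℂ (F i) U)
    (hU : IsOpen U) (k : ℕ) :
    TendstoLocallyUniformlyOn (fun i => iteratedDeriv k (F i)) (iteratedDeriv k f) φ U := by
  induction k with
  | zero => simpa only [iteratedDeriv_zero] using hf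
  | succ k ih =>
    simp only [iteratedDeriv_succ]
    refine ih.deriv (hF.mono fun i hi => ?_) hU
    rw [iteratedDeriv_eq_iterate]
    exact ((hi.analyticOnNhd hU).iterated_deriv k).differentiableOn

theorem iteratedDeriv_succ_id_mul {𝕜 : Type*} [NontriviallyNormedField 𝕜] {g : 𝕜 → 𝕜} {z : 𝕜}
    {k : ℕ} (hg : ContDiffAt 𝕜 (k + 1 : ℕ) g z) :
    iteratedDeriv (k + 1) (fun s => s * g s) z
      = z * iteratedDeriv (k + 1) g z + (k + 1) * iteratedDeriv k g z := by
  rw [iteratedDeriv_fun_mul (f := fun s => s) contDiffAt_id hg, Finset.sum_range_succ',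
    Finset.sum_range_succ']
  simp [iteratedDeriv_fun_id, add_comm]

theorem Real.rpow_neg_le_rpow_neg_add_rpow_neg {b a c σ : ℝ} (hb : 0 < b) (ha : a ≤ σ)
    (hc : σ ≤ c) : b ^ (-σ) ≤ b ^ (-a) + b ^ (-c) := by
  rcases le_total 1 b with hb1 | hb1
  · linarith [Real.rpow_le_rpow_of_exponent_le hb1 (neg_le_neg ha), Real.rpow_nonneg hb.le (-c)]
  · linarith [Real.rpow_le_rpow_of_exponent_ge hb hb1 (neg_le_neg hc),
      Real.rpow_nonneg hb.le (-a)]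

theorem Real.summable_nat_add_rpow_neg {m p : ℝ} (hm : 0 < m) (hp : 1 < p) :
    Summable fun n : ℕ => ((n : ℝ) + m) ^ (-p) := by
  refine ((Real.summable_one_div_nat_add_rpow m p).mpr hp).congr fun n => ?_
  rw [abs_of_pos (by positivity), Real.rpow_neg (by positivity), one_div]

theorem natCast_add_ofReal_mem_slitPlane (n : ℕ) {x : ℝ} (hx : 0 < n + x) :
    (n : ℂ) + x ∈ slitPlane := by
  exact_mod_cast ofReal_mem_slitPlane.mpr hx

theorem hasDerivAt_natCast_add_cpow_neg (n : ℕ) (s : ℂ) {x : ℝ} (hx : 0 < n + x) :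
    HasDerivAt (fun u : ℝ => ((n : ℂ) + u) ^ (-s)) (-s * ((n : ℂ) + x) ^ (-(s + 1))) x := by
  have h := ((hasDerivAt_id' (x : ℂ)).const_add (n : ℂ)).cpow_const (c := -s)
    (natCast_add_ofReal_mem_slitPlane n hx)
  rw [mul_one, ← neg_add'] at h
  exact h.comp_ofReal

theorem norm_natCast_add_cpow (n : ℕ) {x : ℝ} (hx : 0 < n + x) (s : ℂ) :
    ‖((n : ℂ) + x) ^ s‖ = ((n : ℝ) + x) ^ s.re := by
  exact_mod_cast norm_cpow_eq_rpow_re_of_pos hx s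

theorem norm_natCast_add_cpow_neg_sub_le (n : ℕ) {s : ℂ} (hs : -1 ≤ s.re) {m x y : ℝ}
    (hm : 0 < m) (hx : m ≤ x) (hy : m ≤ y) :
    ‖((n : ℂ) + x) ^ (-s) - ((n : ℂ) + y) ^ (-s)‖
      ≤ ‖s‖ * ((n : ℝ) + m) ^ (-(s.re + 1)) * |x - y| := by
  have hpos : ∀ u ∈ Ici m, 0 < (n : ℝ) + u := fun u hu => by
    linarith [mem_Ici.mp hu, n.cast_nonneg (α := ℝ)]
  refine (convex_Ici m).norm_image_sub_le_of_norm_hasDerivWithin_le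
    (fun u hu => (hasDerivAt_natCast_add_cpow_neg n s (hpos u hu)).hasDerivWithinAt)
    (fun u hu => ?_) hy hx
  rw [norm_mul, norm_neg, norm_natCast_add_cpow n (hpos u hu)]
  refine mul_le_mul_of_nonneg_left ?_ (norm_nonneg s)
  simp only [neg_re, add_re, one_re]
  exact Real.rpow_le_rpow_of_nonpos (by positivity) (by simpa using hu) (by linarith)

theorem norm_natCast_add_cpow_neg_sub_sub_le (n : ℕ) {s : ℂ} (hs : -2 ≤ s.re) {m x y : ℝ}
    (hm : 0 < m) (hx : m ≤ x) (hy : m ≤ y) :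
    ‖((n : ℂ) + x) ^ (-s) - ((n : ℂ) + y) ^ (-s) + (x - y) * (s * ((n : ℂ) + y) ^ (-(s + 1)))‖
      ≤ ‖s‖ * ‖s + 1‖ * ((n : ℝ) + m) ^ (-(s.re + 2)) * |x - y| ^ 2 := by
  set c := s * ((n : ℂ) + y) ^ (-(s + 1))
  set ψ : ℝ → ℂ := fun v => ((n : ℂ) + v) ^ (-s) + (v - y) * c
  have hmem : ∀ u ∈ uIcc y x, m ≤ u := fun u hu => le_trans (le_min hy hx) hu.1
  have hderiv : ∀ u ∈ uIcc y x,
      HasDerivAt ψ (-s * (((n : ℂ) + u) ^ (-(s + 1)) - ((n : ℂ) + y) ^ (-(s + 1)))) u := by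
    intro u hu
    have hpos : 0 < (n : ℝ) + u := by linarith [hmem u hu, n.cast_nonneg (α := ℝ)]
    refine ((hasDerivAt_natCast_add_cpow_neg n s hpos).fun_add
      ((((hasDerivAt_id' u).ofReal_comp).sub_const (y : ℂ)).mul_const c)).congr_deriv ?_
    simp only [c, ofReal_one]
    ring
  have hbound : ∀ u ∈ uIcc y x,
      ‖-s * (((n : ℂ) + u) ^ (-(s + 1)) - ((n : ℂ) + y) ^ (-(s + 1)))‖
        ≤ ‖s‖ * ‖s + 1‖ * ((n : ℝ) + m) ^ (-(s.re + 2)) * |x - y| := by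
    intro u hu
    have h := norm_natCast_add_cpow_neg_sub_le n (s := s + 1) (by simp; linarith) hm (hmem u hu) hy
    rw [show (s + 1).re + 1 = s.re + 2 by simp; ring] at h
    rw [norm_mul, norm_neg, mul_assoc ‖s‖, mul_assoc ‖s‖]
    gcongr
    exact h.trans (mul_le_mul_of_nonneg_left (abs_sub_left_of_mem_uIcc hu) (by positivity))
  calc _ = ‖ψ x - ψ y‖ := by simp only [ψ, sub_self, zero_mul, add_zero]; ring_nf
    _ ≤ _ := (convex_uIcc y x).norm_image_sub_le_of_norm_hasDerivWithin_le
        (fun u hu => (hderiv u hu).hasDerivWithinAt) hbound left_mem_uIcc right_mem_uIcc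
    _ = _ := by rw [Real.norm_eq_abs]; ring

theorem re_mem_Ioo_and_norm_lt_of_mem_ball_one {s : ℂ} (hs : s ∈ ball (1 : ℂ) (1 / 2)) :
    1 / 2 < s.re ∧ s.re < 3 / 2 ∧ ‖s‖ < 3 / 2 := by
  rw [mem_ball, dist_eq_norm] at hs
  have hre := abs_lt.mp ((abs_re_le_norm (s - 1)).trans_lt hs)
  have hnorm := norm_le_norm_add_norm_sub' s 1
  simp only [sub_re, one_re] at hre
  refine ⟨?_, ?_, ?_⟩ <;> linarith [norm_one (α := ℂ)]

/-- Dominates `(n + m)^{-σ}` for all `σ ∈ [3/2, 7/2]`, the exponents met on the disc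
`|s - 1| < 1/2` by the first and second `x`-derivatives of `(n + x)^{-s}`. -/
noncomputable def hurwitzMajorant (m : ℝ) (n : ℕ) : ℝ :=
  ((n : ℝ) + m) ^ (-(3 / 2 : ℝ)) + ((n : ℝ) + m) ^ (-(7 / 2 : ℝ))

theorem summable_hurwitzMajorant {m : ℝ} (hm : 0 < m) : Summable (hurwitzMajorant m) :=
  (Real.summable_nat_add_rpow_neg hm (by norm_num)).add
    (Real.summable_nat_add_rpow_neg hm (by norm_num))

theorem rpow_neg_le_hurwitzMajorant {m : ℝ} (hm : 0 < m) (n : ℕ) {σ : ℝ} (h₁ : 3 / 2 ≤ σ)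
    (h₂ : σ ≤ 7 / 2) : ((n : ℝ) + m) ^ (-σ) ≤ hurwitzMajorant m n :=
  Real.rpow_neg_le_rpow_neg_add_rpow_neg (by positivity) h₁ h₂

theorem norm_natCast_add_cpow_neg_sub_le_hurwitzMajorant {s : ℂ} (hs : s ∈ ball (1 : ℂ) (1 / 2))
    (n : ℕ) {m x y : ℝ} (hm : 0 < m) (hx : m ≤ x) (hy : m ≤ y) :
    ‖((n : ℂ) + x) ^ (-s) - ((n : ℂ) + y) ^ (-s)‖ ≤ 2 * hurwitzMajorant m n * |x - y| := by
  obtain ⟨hre₁, hre₂, hnorm⟩ := re_mem_Ioo_and_norm_lt_of_mem_ball_one hs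
  refine (norm_natCast_add_cpow_neg_sub_le n (by linarith) hm hx hy).trans ?_
  gcongr
  · linarith
  · exact rpow_neg_le_hurwitzMajorant hm n (by linarith) (by linarith)

theorem norm_natCast_add_cpow_neg_sub_sub_le_hurwitzMajorant {s : ℂ}
    (hs : s ∈ ball (1 : ℂ) (1 / 2)) (n : ℕ) {m x y : ℝ} (hm : 0 < m) (hx : m ≤ x) (hy : m ≤ y) :
    ‖((n : ℂ) + x) ^ (-s) - ((n : ℂ) + y) ^ (-s) + (x - y) * (s * ((n : ℂ) + y) ^ (-(s + 1)))‖
      ≤ 4 * hurwitzMajorant m n * |x - y| ^ 2 := by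
  obtain ⟨hre₁, hre₂, hnorm⟩ := re_mem_Ioo_and_norm_lt_of_mem_ball_one hs
  have hnorm₁ : ‖s + 1‖ < 5 / 2 := by linarith [norm_add_le s 1, norm_one (α := ℂ)]
  refine (norm_natCast_add_cpow_neg_sub_sub_le n (by linarith) hm hx hy).trans ?_
  gcongr
  · nlinarith [norm_nonneg s]
  · exact rpow_neg_le_hurwitzMajorant hm n (by linarith) (by linarith)

theorem hasSum_natCast_add_cpow_neg_hurwitzZeta {x : ℝ} (hx : x ∈ Icc 0 1) {s : ℂ}
    (hs : 1 < s.re) : HasSum (fun n : ℕ => ((n : ℂ) + x) ^ (-s)) (hurwitzZeta x s) := by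
  simpa only [one_div, cpow_neg] using HurwitzZeta.hasSum_hurwitzZeta_of_one_lt_re hx hs

theorem differentiable_natCast_add_cpow_neg (n : ℕ) {x : ℝ} (hx : 0 < x) :
    Differentiable ℂ fun w : ℂ => ((n : ℂ) + x) ^ (-w) :=
  differentiable_neg.const_cpow <| Or.inl <| slitPlane_ne_zero <|
    natCast_add_ofReal_mem_slitPlane n (by positivity)

theorem hasSum_natCast_add_cpow_neg_sub {m x y : ℝ} (hm : 0 < m) (hx : x ∈ Icc m 1)
    (hy : y ∈ Icc m 1) {F : ℂ → ℂ} (hF : DifferentiableOn ℂ F (ball 1 (1 / 2)))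
    (hFζ : ∀ w : ℂ, 1 < w.re → F w = hurwitzZeta x w - hurwitzZeta y w)
    {s : ℂ} (hs : s ∈ ball (1 : ℂ) (1 / 2)) :
    HasSum (fun n : ℕ => ((n : ℂ) + x) ^ (-s) - ((n : ℂ) + y) ^ (-s)) (F s) := by
  have hsummable := ((summable_hurwitzMajorant hm).mul_left 2).mul_right |x - y|
  have hbound (n : ℕ) (w : ℂ) (hw : w ∈ ball (1 : ℂ) (1 / 2)) :=
    norm_natCast_add_cpow_neg_sub_le_hurwitzMajorant hw n hm hx.1 hy.1
  have hT := differentiableOn_tsum_of_summable_norm hsummable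
    (fun n => ((differentiable_natCast_add_cpow_neg n (hm.trans_le hx.1)).sub
      (differentiable_natCast_add_cpow_neg n (hm.trans_le hy.1))).differentiableOn)
    isOpen_ball hbound
  have hmem : (5 / 4 : ℂ) ∈ ball (1 : ℂ) (1 / 2) := by
    rw [mem_ball, dist_eq_norm]; norm_num
  have heq := (hF.analyticOnNhd isOpen_ball).eqOn_of_preconnected_of_eventuallyEq
    (hT.analyticOnNhd isOpen_ball) (convex_ball _ _).isPreconnected hmem ?_
  · rw [heq hs]
    exact (Summable.of_norm_bounded hsummable fun n => hbound n s hs).hasSum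
  · have hopen : IsOpen {w : ℂ | 1 < w.re} := isOpen_lt continuous_const continuous_re
    filter_upwards [hopen.mem_nhds (by norm_num : (1 : ℝ) < (5 / 4 : ℂ).re)] with w hw
    rw [hFζ w hw]
    have hIcc : Icc m 1 ⊆ Icc 0 1 := Icc_subset_Icc_left hm.le
    exact (((hasSum_natCast_add_cpow_neg_hurwitzZeta (hIcc hx) hw).sub
      (hasSum_natCast_add_cpow_neg_hurwitzZeta (hIcc hy) hw)).tsum_eq).symm

theorem norm_slope_add_mul_hurwitzZeta_le {m x y : ℝ} (hm : 0 < m) (hx : x ∈ Icc m 1)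
    (hy : y ∈ Icc m 1) (hxy : x ≠ y) {F : ℂ → ℂ} (hF : DifferentiableOn ℂ F (ball 1 (1 / 2)))
    (hFζ : ∀ w : ℂ, 1 < w.re → F w = hurwitzZeta x w - hurwitzZeta y w)
    {s : ℂ} (hs : s ∈ ball (1 : ℂ) (1 / 2)) :
    ‖((x - y : ℝ) : ℂ)⁻¹ * F s + s * hurwitzZeta y (s + 1)‖
      ≤ 4 * (∑' n, hurwitzMajorant m n) * |x - y| := by
  have hζ := hasSum_natCast_add_cpow_neg_hurwitzZeta (Icc_subset_Icc_left hm.le hy)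
    (s := s + 1) (by linarith [(re_mem_Ioo_and_norm_lt_of_mem_ball_one hs).1, add_re s 1, one_re])
  have hsum := (hasSum_natCast_add_cpow_neg_sub hm hx hy hF hFζ hs).add
    ((hζ.mul_left s).mul_left ((x - y : ℝ) : ℂ))
  have hbound := hsum.norm_le_of_bounded
    ((summable_hurwitzMajorant hm).hasSum.mul_left (4 * |x - y| ^ 2)) fun n => by
      have h := norm_natCast_add_cpow_neg_sub_sub_le_hurwitzMajorant hs n hm hx.1 hy.1
      push_cast
      linarith
  have hxy' : ((x - y : ℝ) : ℂ) ≠ 0 := ofReal_ne_zero.mpr (sub_ne_zero.mpr hxy)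
  calc _ = ‖((x - y : ℝ) : ℂ)⁻¹ * (F s + (x - y : ℝ) * (s * hurwitzZeta y (s + 1)))‖ := by
        rw [mul_add, inv_mul_cancel_left₀ hxy']
    _ ≤ |x - y|⁻¹ * (4 * |x - y| ^ 2 * ∑' n, hurwitzMajorant m n) := by
        rw [norm_mul, norm_inv, norm_real, Real.norm_eq_abs]
        gcongr
    _ = _ := by field_simp

theorem tendstoUniformlyOn_slope_hurwitzZeta {α : ℝ} (hα : α ∈ Ioo 0 1) {G : ℝ → ℂ → ℂ}
    (hG : ∀ x ∈ Ioo 0 1, DifferentiableOn ℂ (G x) (ball 1 (1 / 2)))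
    (hGζ : ∀ x ∈ Ioo 0 1, ∀ w : ℂ, 1 < w.re →
      G x w - G α w = hurwitzZeta x w - hurwitzZeta α w) :
    TendstoUniformlyOn (fun (t : ℝ) (s : ℂ) => (t : ℂ)⁻¹ * (G (α + t) s - G α s))
      (fun s => -(s * hurwitzZeta α (s + 1))) (𝓝[≠] 0) (ball 1 (1 / 2)) := by
  set m := α / 2 with hm_def
  have hm : 0 < m := half_pos hα.1
  have hW : 0 ≤ ∑' n, hurwitzMajorant m n := tsum_nonneg fun n => by
    unfold hurwitzMajorant; positivity
  rw [Metric.tendstoUniformlyOn_iff]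
  intro ε hε
  have hδ : 0 < min (min m (1 - α)) (ε / (4 * ∑' n, hurwitzMajorant m n + 1)) :=
    lt_min (lt_min hm (sub_pos.mpr hα.2)) (by positivity)
  filter_upwards [self_mem_nhdsWithin, nhdsWithin_le_nhds (Metric.ball_mem_nhds 0 hδ)]
    with t ht0 htδ s hs
  rw [mem_ball, Real.dist_0_eq_abs, lt_min_iff, lt_min_iff] at htδ
  obtain ⟨⟨htm, htα⟩, htε⟩ := htδ
  rw [lt_div_iff₀ (by positivity)] at htε
  obtain ⟨ht₁, ht₂⟩ := abs_lt.mp htm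
  have hx : α + t ∈ Ioo 0 1 := ⟨by linarith, by linarith [le_abs_self t]⟩
  have h := norm_slope_add_mul_hurwitzZeta_le hm (x := α + t) ⟨by linarith, hx.2.le⟩
    ⟨by linarith, hα.2.le⟩ (by simpa using ht0) ((hG _ hx).sub (hG α hα)) (hGζ _ hx) hs
  rw [add_sub_cancel_left, Pi.sub_apply] at h
  rw [dist_eq_norm', sub_neg_eq_add]
  nlinarith [abs_pos.mpr ht0]

theorem analyticAt_hurwitzZeta (a : UnitAddCircle) {s : ℂ} (hs : s ≠ 1) :
    AnalyticAt ℂ (hurwitzZeta a) s :=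
  analyticAt_iff_eventually_differentiableAt.mpr <|
    (eventually_ne_nhds hs).mono fun _ hw => differentiableAt_hurwitzZeta a hw

theorem iteratedDeriv_succ_mul_hurwitzZeta_add_one (a : UnitAddCircle) (k : ℕ) :
    iteratedDeriv (k + 1) (fun s => s * hurwitzZeta a (s + 1)) 1
      = iteratedDeriv (k + 1) (hurwitzZeta a) 2 + (k + 1) * iteratedDeriv k (hurwitzZeta a) 2 := by
  have hg : AnalyticAt ℂ (fun s => hurwitzZeta a (s + 1)) 1 :=
    (analyticAt_hurwitzZeta a (by norm_num)).comp (analyticAt_id.add analyticAt_const)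
  rw [iteratedDeriv_succ_id_mul hg.contDiffAt, iteratedDeriv_comp_add_const,
    iteratedDeriv_comp_add_const]
  norm_num

theorem stmt_14 (r : ℕ) (hr : 1 ≤ r) (α : ℝ) (hα0 : 0 < α) (hα1 : α < 1)
    (G : ℝ → ℂ → ℂ)
    (hG : ∀ x : ℝ, 0 < x → x < 1 → Differentiable ℂ (G x))
    (hG1 : ∀ x : ℝ, 0 < x → x < 1 → ∀ w : ℂ, w ≠ 1 →
      G x w = HurwitzZeta.hurwitzZeta (x : UnitAddCircle) w - 1 / (w - 1)) :
    HasDerivAt (fun x : ℝ => iteratedDeriv r (G x) 1 / (r.factorial : ℂ))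
      (-(iteratedDeriv (r - 1)
            (fun w => HurwitzZeta.hurwitzZeta (α : UnitAddCircle) w) 2) /
          ((r - 1).factorial : ℂ)
        - (iteratedDeriv r
            (fun w => HurwitzZeta.hurwitzZeta (α : UnitAddCircle) w) 2) /
          (r.factorial : ℂ)) α := by
  have hα : α ∈ Ioo 0 1 := ⟨hα0, hα1⟩
  have hslope := tendstoUniformlyOn_slope_hurwitzZeta hα
    (fun x hx => (hG x hx.1 hx.2).differentiableOn) fun x hx w hw => by
      have hw1 : w ≠ 1 := fun h => by simp [h] at hw
      rw [hG1 x hx.1 hx.2 w hw1, hG1 α hα0 hα1 w hw1]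
      ring
  have hnear : ∀ᶠ t : ℝ in 𝓝[≠] 0, α + t ∈ Ioo 0 1 := by
    filter_upwards [nhdsWithin_le_nhds (Ioo_mem_nhds (neg_neg_of_pos hα0) (sub_pos.mpr hα1))]
      with t ht
    exact ⟨by linarith [ht.1], by linarith [ht.2]⟩
  have hlim := (hslope.tendstoLocallyUniformlyOn.iteratedDeriv
    (hnear.mono fun t ht => (((hG _ ht.1 ht.2).sub (hG α hα0 hα1)).const_mul _).differentiableOn)
    isOpen_ball r).tendsto_at (mem_ball_self (by norm_num))
  have hderiv : HasDerivAt (fun x : ℝ => iteratedDeriv r (G x) 1)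
      (iteratedDeriv r (fun s => -(s * hurwitzZeta α (s + 1))) 1) α := by
    rw [hasDerivAt_iff_tendsto_slope_zero]
    refine hlim.congr' (hnear.mono fun t ht => ?_)
    dsimp only
    rw [iteratedDeriv_const_mul_field, iteratedDeriv_fun_sub (hG _ ht.1 ht.2).contDiff.contDiffAt
      (hG α hα0 hα1).contDiff.contDiffAt, real_smul, ofReal_inv]
  obtain ⟨k, rfl⟩ := Nat.exists_eq_add_of_le' hr
  rw [iteratedDeriv_fun_neg, iteratedDeriv_succ_mul_hurwitzZeta_add_one] at hderiv
  refine (hderiv.div_const ((k + 1).factorial : ℂ)).congr_deriv ?_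
  rw [Nat.add_sub_cancel, Nat.factorial_succ]
  push_cast
  field_simp
  ring
end
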